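/- arXiv:2109.04460 — 2 statements merged into one kernel-verified Lean document; each statement's English description precedes it below -/
import Mathlib

section
/- Let p₁,...,pₙ be points in a metric space, and let (a,b) be a pair maximizing d(pₐ,p_b) over all pairs. Fix any index k, let l be an index maximizing d(p_k, p_l), and let m be an index maximizing d(p_l, p_m). Then d(pₐ, p_b) ≤ 2·d(p_l, p_m). -/
theorem two_step_farthest_point_diameter_bound
    {X : Type*} [MetricSpace X] (n : ℕ) (hn : 1 ≤ n) (p : Fin n → X)
    (a b k l m : Fin n)
    (hab : ∀ i j, dist (p i) (p j) ≤ dist (p a) (p b))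
    (hl : ∀ i, dist (p k) (p i) ≤ dist (p k) (p l))
    (hm : ∀ i, dist (p l) (p i) ≤ dist (p l) (p m)) :
    dist (p a) (p b) ≤ 2 * dist (p l) (p m) := by
  have h1 := dist_triangle (p a) (p k) (p b)
  have h2 : dist (p a) (p k) ≤ dist (p k) (p l) := by
    rw [dist_comm]; exact hl a
  have h3 := hl b
  have h4 : dist (p k) (p l) ≤ dist (p l) (p m) := by
    rw [dist_comm]; exact hm k
  linarith
end

section
/- Let P = (p₁,...,pₙ) and P' = (p'₁,...,p'ₙ) be tuples of points in ℝ³ and let (a,b) be a pair maximizing ‖pₐ - p_b‖. Suppose ‖p'ₐ - p'_b‖ = α·‖pₐ - p_b‖ for some real α. If l, m are chosen from P by the two-step farthest-point heuristic, then D_max(P,P') := (‖pₐ-p_b‖ - ‖p'ₐ-p'_b‖)² ≤ 4·(1-α)²·‖p_l - p_m‖². -/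
theorem Dmax_four_alpha_approx
    (n : ℕ) (P P' : Fin n → EuclideanSpace ℝ (Fin 3))
    (a b k l m : Fin n)
    (hab : ∀ i j, ‖P i - P j‖ ≤ ‖P a - P b‖)
    (α : ℝ) (hα : ‖P' a - P' b‖ = α * ‖P a - P b‖)
    (hl : ∀ i, ‖P k - P i‖ ≤ ‖P k - P l‖)
    (hm : ∀ i, ‖P l - P i‖ ≤ ‖P l - P m‖) :
    (‖P a - P b‖ - ‖P' a - P' b‖) ^ 2 ≤ 4 * (1 - α) ^ 2 * ‖P l - P m‖ ^ 2 := by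
  have hkl : ‖P k - P l‖ ≤ ‖P l - P m‖ := by
    calc ‖P k - P l‖ = ‖P l - P k‖ := norm_sub_rev _ _
    _ ≤ ‖P l - P m‖ := hm k
  have hdiam : ‖P a - P b‖ ≤ 2 * ‖P l - P m‖ := by
    calc ‖P a - P b‖ ≤ ‖P a - P k‖ + ‖P k - P b‖ := norm_sub_le_norm_sub_add_norm_sub _ _ _
    _ = ‖P k - P a‖ + ‖P k - P b‖ := by rw [norm_sub_rev]
    _ ≤ ‖P k - P l‖ + ‖P k - P l‖ := add_le_add (hl a) (hl b)
    _ ≤ ‖P l - P m‖ + ‖P l - P m‖ := add_le_add hkl hkl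
    _ = 2 * ‖P l - P m‖ := (two_mul _).symm
  rw [hα]
  have h1 : ‖P a - P b‖ - α * ‖P a - P b‖ = (1 - α) * ‖P a - P b‖ := by ring
  rw [h1, mul_pow]
  have h2 : ‖P a - P b‖ ^ 2 ≤ (2 * ‖P l - P m‖) ^ 2 :=
    pow_le_pow_left₀ (norm_nonneg _) hdiam 2
  nlinarith [sq_nonneg (1 - α), sq_nonneg ‖P a - P b‖]
end
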